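/- arXiv:2410.03943 — 5 statements merged into one kernel-verified Lean document; each statement's English description precedes it below -/
import Mathlib

section
/- Let A be a diagonal m×m real matrix with nonnegative entries, Δt > 0, and S = (I + Δt²A)⁻¹. Then every eigenvalue of the 2m×2m block matrix M^IM = [[S, -ΔtAS], [ΔtS, S]] has the form λ = S_{kk} ± i·Δt·S_{kk}·√(A_{kk}) for some k, and satisfies |λ|² = S_{kk} ≤ 1. In particular the spectral radius of M^IM is at most 1. -/
/-!
The blocks of `M^IM` are diagonal, so after interleaving the two copies of `Fin m` the matrix
is block diagonal with `2 × 2` blocks `[[s, -Δt d s], [Δt s, s]]`, where `s = 1 / (1 + Δt² d)`.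
Each block has characteristic polynomial `(λ - s)² + (Δt s √d)²`, with roots `s ± i Δt s √d`
of squared modulus `s² (1 + Δt² d) = s ≤ 1`.
-/

open Matrix Complex

theorem Matrix.det_fromBlocks_diagonal {ι R : Type*} [Fintype ι] [DecidableEq ι] [CommRing R]
    (a b c e : ι → R) :
    (fromBlocks (diagonal a) (diagonal b) (diagonal c) (diagonal e)).det
      = ∏ k, (a k * e k - b k * c k) := by
  let σ : ι ⊕ ι ≃ Fin 2 × ι :=
    (Equiv.boolProdEquivSum ι).symm.trans (Equiv.prodCongr finTwoEquiv.symm (Equiv.refl ι))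
  have hblocks : fromBlocks (diagonal a) (diagonal b) (diagonal c) (diagonal e)
      = (blockDiagonal fun k => !![a k, b k; c k, e k]).submatrix σ σ := by
    ext (k | k) (l | l) <;> by_cases h : k = l <;> simp [σ, finTwoEquiv, blockDiagonal_apply, h]
  rw [hblocks, det_submatrix_equiv_self, det_blockDiagonal]
  simp only [det_fin_two_of]

theorem Matrix.exists_det_eq_zero_of_mem_spectrum_fromBlocks_diagonal {ι K : Type*} [Fintype ι]
    [DecidableEq ι] [Field K] {a b c e : ι → K} {x : K}
    (hx : x ∈ spectrum K (fromBlocks (diagonal a) (diagonal b) (diagonal c) (diagonal e))) :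
    ∃ k, (x - a k) * (x - e k) - b k * c k = 0 := by
  rw [spectrum.mem_iff, isUnit_iff_isUnit_det, isUnit_iff_ne_zero, not_not,
    Algebra.algebraMap_eq_smul_one, ← fromBlocks_one, fromBlocks_smul, smul_zero,
    smul_one_eq_diagonal] at hx
  simp only [sub_eq_add_neg, fromBlocks_neg, fromBlocks_add, diagonal_neg, diagonal_add,
    zero_add, det_fromBlocks_diagonal, Finset.prod_eq_zero_iff] at hx
  obtain ⟨k, -, hk⟩ := hx
  exact ⟨k, by linear_combination hk⟩

theorem Matrix.inv_one_add_smul_diagonal {ι K : Type*} [Fintype ι] [DecidableEq ι] [Field K]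
    (c : K) (d : ι → K) (h : ∀ k, 1 + c * d k ≠ 0) :
    (1 + c • diagonal d)⁻¹ = diagonal fun k => 1 / (1 + c * d k) := by
  apply inv_eq_left_inv
  rw [← diagonal_one, ← diagonal_smul, diagonal_add, diagonal_mul_diagonal]
  congr 1
  ext k
  simp [h k]

theorem Complex.eq_add_or_eq_sub_of_sub_sq_add_sq_eq_zero {z : ℂ} {s r : ℝ}
    (h : (z - s) ^ 2 + (r : ℂ) ^ 2 = 0) : z = s + I * r ∨ z = s - I * r := by
  have : (z - (s + I * r)) * (z - (s - I * r)) = 0 := by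
    linear_combination (exp := 1) h - r ^ 2 * I_sq
  simpa [sub_eq_zero] using this

theorem Complex.norm_sq_eq_of_sub_sq_add_sq_eq_zero {z : ℂ} {s r : ℝ}
    (h : (z - s) ^ 2 + (r : ℂ) ^ 2 = 0) : ‖z‖ ^ 2 = s ^ 2 + r ^ 2 := by
  rw [← normSq_eq_norm_sq]
  rcases eq_add_or_eq_sub_of_sub_sq_add_sq_eq_zero h with rfl | rfl
  · rw [mul_comm, normSq_add_mul_I]
  · rw [mul_comm, sub_eq_add_neg, ← neg_mul, ← ofReal_neg, normSq_add_mul_I, neg_sq]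

theorem Matrix.exists_sub_sq_add_sq_eq_zero_of_mem_spectrum {ι : Type*} [Fintype ι]
    [DecidableEq ι] {a s : ι → ℝ} (ha : ∀ k, 0 ≤ a k) (c : ℝ) {x : ℂ}
    (hx : x ∈ spectrum ℂ (fromBlocks (diagonal fun k => (s k : ℂ))
      (-((c : ℂ) • (diagonal (fun k => (a k : ℂ)) * diagonal fun k => (s k : ℂ))))
      ((c : ℂ) • diagonal fun k => (s k : ℂ)) (diagonal fun k => (s k : ℂ)))) :
    ∃ k, (x - s k) ^ 2 + ((c * s k * √(a k) : ℝ) : ℂ) ^ 2 = 0 := by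
  simp only [diagonal_mul_diagonal, ← diagonal_smul, diagonal_neg] at hx
  obtain ⟨k, hk⟩ := exists_det_eq_zero_of_mem_spectrum_fromBlocks_diagonal hx
  simp only [Pi.smul_apply, smul_eq_mul] at hk
  have hsqrt : ((√(a k) : ℝ) : ℂ) ^ 2 = a k := by exact_mod_cast Real.sq_sqrt (ha k)
  refine ⟨k, ?_⟩
  push_cast
  linear_combination hk + (c * s k : ℂ) ^ 2 * hsqrt

theorem sq_add_mul_mul_sqrt_sq_eq_self {a c s : ℝ} (ha : 0 ≤ a) (hs : s * (1 + c ^ 2 * a) = 1) :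
    s ^ 2 + (c * s * √a) ^ 2 = s := by
  rw [mul_pow, mul_pow, Real.sq_sqrt ha]
  linear_combination s * hs

theorem stmt1_general (m : ℕ) (d : Fin m → ℝ) (hd : ∀ k, 0 ≤ d k) (Δt : ℝ)
    (MIM : Matrix (Fin m ⊕ Fin m) (Fin m ⊕ Fin m) ℂ)
    (Adiag : Matrix (Fin m) (Fin m) ℂ) (hA : Adiag = Matrix.diagonal (fun k => (d k : ℂ)))
    (Sdiag : Matrix (Fin m) (Fin m) ℂ)
    (hS : Sdiag = (1 + (Δt : ℂ) ^ 2 • Adiag)⁻¹)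
    (hM : MIM = Matrix.fromBlocks Sdiag (-((Δt : ℂ) • (Adiag * Sdiag)))
      ((Δt : ℂ) • Sdiag) Sdiag) :
    (∀ lam ∈ spectrum ℂ MIM, ∃ k : Fin m,
        (lam = (1 / (1 + Δt ^ 2 * d k) : ℝ) + Complex.I * Δt * (1 / (1 + Δt ^ 2 * d k) : ℝ) * (Real.sqrt (d k) : ℝ)
          ∨ lam = (1 / (1 + Δt ^ 2 * d k) : ℝ) - Complex.I * Δt * (1 / (1 + Δt ^ 2 * d k) : ℝ) * (Real.sqrt (d k) : ℝ))
        ∧ ‖lam‖ ^ 2 = 1 / (1 + Δt ^ 2 * d k)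
        ∧ (1 / (1 + Δt ^ 2 * d k) : ℝ) ≤ 1)
      ∧ ∀ lam ∈ spectrum ℂ MIM, ‖lam‖ ≤ 1 := by
  set s : Fin m → ℝ := fun k => 1 / (1 + Δt ^ 2 * d k) with hs
  have hge (k : Fin m) : 1 ≤ 1 + Δt ^ 2 * d k :=
    le_add_of_nonneg_right (by have := hd k; positivity)
  have hne (k : Fin m) : 1 + Δt ^ 2 * d k ≠ 0 := (zero_lt_one.trans_le (hge k)).ne'
  have hSdiag : Sdiag = diagonal fun k => (s k : ℂ) := by
    have hneC (k : Fin m) : 1 + (Δt : ℂ) ^ 2 * d k ≠ 0 := by exact_mod_cast hne k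
    rw [hS, hA, inv_one_add_smul_diagonal _ _ hneC]
    push_cast [hs]
    rfl
  have hmain : ∀ lam ∈ spectrum ℂ MIM, ∃ k, (lam = s k + I * Δt * s k * √(d k)
      ∨ lam = s k - I * Δt * s k * √(d k)) ∧ ‖lam‖ ^ 2 = s k ∧ s k ≤ 1 := by
    intro lam hlam
    rw [hM, hSdiag, hA] at hlam
    obtain ⟨k, hk⟩ := exists_sub_sq_add_sq_eq_zero_of_mem_spectrum hd Δt hlam
    refine ⟨k, ?_, ?_, div_le_one_of_le₀ (hge k) (zero_le_one.trans (hge k))⟩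
    · rcases eq_add_or_eq_sub_of_sub_sq_add_sq_eq_zero hk with h | h <;> [left; right] <;>
        rw [h] <;> push_cast <;> ring
    · rw [norm_sq_eq_of_sub_sq_add_sq_eq_zero hk, sq_add_mul_mul_sqrt_sq_eq_self (hd k) (one_div_mul_cancel (hne k))]
  refine ⟨hmain, fun lam hlam => ?_⟩
  obtain ⟨k, -, hnorm, hle⟩ := hmain lam hlam
  exact (sq_le_one_iff₀ (norm_nonneg lam)).1 (hnorm ▸ hle)

/-- Every eigenvalue of `M^IM = [[S, -ΔtAS], [ΔtS, S]]` (with `A = diagonal d`,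
`d ≥ 0`, `S = (I + Δt²A)⁻¹`) has the form `S_kk ± i Δt S_kk √(A_kk)` and satisfies
`|λ|² = S_kk ≤ 1`; in particular the spectral radius is at most 1. -/
theorem stmt1 (m : ℕ) (d : Fin m → ℝ) (hd : ∀ k, 0 ≤ d k) (Δt : ℝ) (hΔt : 0 < Δt)
    (A S MIM : Matrix (Fin m ⊕ Fin m) (Fin m ⊕ Fin m) ℂ)
    (Adiag : Matrix (Fin m) (Fin m) ℂ) (hA : Adiag = Matrix.diagonal (fun k => (d k : ℂ)))
    (Sdiag : Matrix (Fin m) (Fin m) ℂ)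
    (hS : Sdiag = (1 + (Δt : ℂ) ^ 2 • Adiag)⁻¹)
    (hM : MIM = Matrix.fromBlocks Sdiag (-((Δt : ℂ) • (Adiag * Sdiag)))
      ((Δt : ℂ) • Sdiag) Sdiag) :
    (∀ lam ∈ spectrum ℂ MIM, ∃ k : Fin m,
        (lam = (1 / (1 + Δt ^ 2 * d k) : ℝ) + Complex.I * Δt * (1 / (1 + Δt ^ 2 * d k) : ℝ) * (Real.sqrt (d k) : ℝ)
          ∨ lam = (1 / (1 + Δt ^ 2 * d k) : ℝ) - Complex.I * Δt * (1 / (1 + Δt ^ 2 * d k) : ℝ) * (Real.sqrt (d k) : ℝ))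
        ∧ ‖lam‖ ^ 2 = 1 / (1 + Δt ^ 2 * d k)
        ∧ (1 / (1 + Δt ^ 2 * d k) : ℝ) ≤ 1)
      ∧ ∀ lam ∈ spectrum ℂ MIM, ‖lam‖ ≤ 1 :=
  stmt1_general m d hd Δt MIM Adiag hA Sdiag hS hM
end

section
/- For a 2×2 real matrix with entries s, -Δt·a·s, Δt·s, s (i.e., [[s, -Δt a s],[Δt s, s]]) where a ≥ 0, Δt > 0 and s = 1/(1 + Δt² a), the complex eigenvalues are s ± i Δt s √a, and their squared modulus equals s. -/
open Matrix Complex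

/-! The characteristic polynomial of `!![p, -c; d, p]` is `(μ - p)² + c d`, which splits as
`(μ - p - v)(μ - p + v)` once `v² = -c d`; here `v = i Δt s √a`. The squared modulus of both
eigenvalues is `s² + Δt² a s² = s · s (1 + Δt² a) = s`. -/

theorem mem_spectrum_fin_two_iff {K : Type*} [Field K] (M : Matrix (Fin 2) (Fin 2) K) (μ : K) :
    μ ∈ spectrum K M ↔ (μ - M 0 0) * (μ - M 1 1) - M 0 1 * M 1 0 = 0 := by
  rw [spectrum.mem_iff, Matrix.isUnit_iff_isUnit_det, isUnit_iff_ne_zero, not_not, Matrix.det_fin_two]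
  simp [Matrix.algebraMap_matrix_apply]

theorem spectrum_fin_two_of_sq_eq {K : Type*} [Field K] (p c d v : K) (hv : v ^ 2 = -(c * d)) :
    spectrum K !![p, -c; d, p] = {p + v, p - v} := by
  ext μ
  have hfactor : (μ - p) * (μ - p) - -c * d = (μ - (p + v)) * (μ - (p - v)) := by
    linear_combination hv
  rw [mem_spectrum_fin_two_iff]
  simp only [of_apply, cons_val', cons_val_zero, cons_val_one, empty_val', cons_val_fin_one]
  rw [hfactor, mul_eq_zero, sub_eq_zero, sub_eq_zero]
  rfl

theorem sq_norm_ofReal_add_I_mul (x y : ℝ) : ‖(x : ℂ) + I * y‖ ^ 2 = x ^ 2 + y ^ 2 := by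
  rw [Complex.sq_norm, mul_comm, normSq_add_mul_I]

theorem sq_norm_ofReal_sub_I_mul (x y : ℝ) : ‖(x : ℂ) - I * y‖ ^ 2 = x ^ 2 + y ^ 2 := by
  rw [sub_eq_add_neg, ← mul_neg, ← ofReal_neg, sq_norm_ofReal_add_I_mul, neg_sq]

theorem stmt2_general (a Δt s : ℝ) (ha : 0 ≤ a) (hs : s = 1 / (1 + Δt ^ 2 * a))
    (M : Matrix (Fin 2) (Fin 2) ℂ)
    (hM : M = !![(s : ℂ), -(Δt * a * s : ℝ); (Δt * s : ℝ), (s : ℂ)]) :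
    spectrum ℂ M =
      {(s : ℂ) + Complex.I * Δt * s * Real.sqrt a, (s : ℂ) - Complex.I * Δt * s * Real.sqrt a}
    ∧ ∀ lam ∈ spectrum ℂ M, ‖lam‖ ^ 2 = s := by
  set w : ℝ := Δt * s * √a with hw
  have hsqrt : (√a : ℂ) ^ 2 = a := by exact_mod_cast Real.sq_sqrt ha
  have hspec : spectrum ℂ M = {(s : ℂ) + I * Δt * s * √a, (s : ℂ) - I * Δt * s * √a} := by
    rw [hM]
    apply spectrum_fin_two_of_sq_eq
    push_cast
    linear_combination I ^ 2 * (Δt : ℂ) ^ 2 * s ^ 2 * hsqrt + (Δt : ℂ) ^ 2 * s ^ 2 * a * I_sq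
  have hI : I * Δt * s * √a = I * (w : ℂ) := by rw [hw]; push_cast; ring
  have hmodulus : s ^ 2 + w ^ 2 = s := by
    have hpos : 0 < 1 + Δt ^ 2 * a := by positivity
    rw [hw, mul_pow, Real.sq_sqrt ha, hs]
    field_simp
  refine ⟨hspec, fun lam hlam => ?_⟩
  rw [hspec, hI, Set.mem_insert_iff, Set.mem_singleton_iff] at hlam
  rcases hlam with rfl | rfl
  · rw [sq_norm_ofReal_add_I_mul, hmodulus]
  · rw [sq_norm_ofReal_sub_I_mul, hmodulus]

/-- For `M = [[s, -Δt a s],[Δt s, s]]` with `a ≥ 0`, `Δt > 0`,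
`s = 1/(1 + Δt² a)`, the complex eigenvalues are `s ± i Δt s √a`, each of squared
modulus `s`. -/
theorem stmt2 (a Δt s : ℝ) (ha : 0 ≤ a) (hΔt : 0 < Δt) (hs : s = 1 / (1 + Δt ^ 2 * a))
    (M : Matrix (Fin 2) (Fin 2) ℂ)
    (hM : M = !![(s : ℂ), -(Δt * a * s : ℝ); (Δt * s : ℝ), (s : ℂ)]) :
    spectrum ℂ M =
      {(s : ℂ) + Complex.I * Δt * s * Real.sqrt a, (s : ℂ) - Complex.I * Δt * s * Real.sqrt a}
    ∧ ∀ lam ∈ spectrum ℂ M, ‖lam‖ ^ 2 = s :=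
  stmt2_general a Δt s ha hs M hM
end

section
/- For the implicit discretization with a ≥ 0 and Δt > 0: z_n = S(z_{n-1} − Δt·a·y_{n-1}), y_n = y_{n-1} + Δt·z_n with S = 1/(1+Δt²a) and zero input, the energy E(y,z) = a y² + z² is non-increasing: E(y_n, z_n) ≤ E(y_{n-1}, z_{n-1}). -/
/-! One implicit step multiplies the energy exactly by `S = 1/(1 + Δt² a)`, which lies in `(0, 1]`
when `a ≥ 0`; energy is nonnegative, so it cannot grow. -/

-- The defect of the identity is `(S w² - a y²) (S (1 + Δt² a) - 1)` with `w = z - Δt a y`.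
theorem implicit_oscillator_energy_eq {a Δt S : ℝ} (hS : S * (1 + Δt ^ 2 * a) = 1) (y z : ℝ) :
    a * (y + Δt * (S * (z - Δt * a * y))) ^ 2 + (S * (z - Δt * a * y)) ^ 2 =
      S * (a * y ^ 2 + z ^ 2) := by
  linear_combination (S * (z - Δt * a * y) ^ 2 - a * y ^ 2) * hS

theorem stmt13_general (a Δt S : ℝ) (ha : 0 ≤ a)
    (hS : S = 1 / (1 + Δt ^ 2 * a))
    (y z : ℕ → ℝ)
    (hz : ∀ n, z (n + 1) = S * (z n - Δt * a * y n))
    (hy : ∀ n, y (n + 1) = y n + Δt * z (n + 1))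
    (E : ℝ → ℝ → ℝ) (hE : ∀ Y Z, E Y Z = a * Y ^ 2 + Z ^ 2) :
    ∀ n, E (y (n + 1)) (z (n + 1)) ≤ E (y n) (z n) := by
  intro n
  have hD : 1 ≤ 1 + Δt ^ 2 * a := le_add_of_nonneg_right (by positivity)
  have hS_inv : S * (1 + Δt ^ 2 * a) = 1 := by
    rw [hS]
    field_simp
  have hS_le : S ≤ 1 := by
    rw [hS]
    exact div_le_one_of_le₀ hD (zero_le_one.trans hD)
  rw [hE, hE, hy, hz, implicit_oscillator_energy_eq hS_inv]
  exact mul_le_of_le_one_left (by positivity) hS_le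

/-- for the scalar implicit discretization
`z_n = S(z_{n-1} − Δt a y_{n-1})`, `y_n = y_{n-1} + Δt z_n` with `S = 1/(1+Δt²a)`,
`a ≥ 0`, `Δt > 0`, and zero input, the energy `E(y,z) = a y² + z²` is non-increasing. -/
theorem stmt13 (a Δt S : ℝ) (ha : 0 ≤ a) (hΔt : 0 < Δt)
    (hS : S = 1 / (1 + Δt ^ 2 * a))
    (y z : ℕ → ℝ)
    (hz : ∀ n, z (n + 1) = S * (z n - Δt * a * y n))
    (hy : ∀ n, y (n + 1) = y n + Δt * z (n + 1))
    (E : ℝ → ℝ → ℝ) (hE : ∀ Y Z, E Y Z = a * Y ^ 2 + Z ^ 2) :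
    ∀ n, E (y (n + 1)) (z (n + 1)) ≤ E (y n) (z n) :=
  stmt13_general a Δt S ha hS y z hz hy E hE
end

section
/- Let a ≥ 0, Δt > 0, s = 1/(1+Δt²a), and λ = s + iΔt s√a an eigenvalue of the implicit LinOSS matrix. Then for every n ≥ 1, |λ|^n = s^{n/2} = (1 + Δt² a)^{−n/2} > 0; in particular powers of the eigenvalue modulus decay at most polynomially in exp: |λ|^n ≥ (1+Δt²a)^{−n/2}, and if Δt² a ≤ c/n then |λ|^n ≥ e^{−c/2}. -/
/-!
The eigenvalue factors as `λ = s (1 + i Δt √a)` with `s = (1 + Δt² a)⁻¹`, so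
`|λ| = s √(1 + Δt² a) = (1 + Δt² a)^{-1/2}`. The lower bound is `1 + x ≤ eˣ` raised to the
power `-n/2`: `(1 + Δt² a)^{-n/2} ≥ e^{-n Δt² a / 2} ≥ e^{-c/2}`.
-/

open Real
open Complex (I)

theorem exp_neg_mul_le_one_add_rpow_neg {x t : ℝ} (hx : 0 ≤ x) (ht : 0 ≤ t) :
    exp (-(t * x)) ≤ (1 + x) ^ (-t) :=
  calc exp (-(t * x)) = exp x ^ (-t) := by rw [← exp_mul]; ring_nf
    _ ≤ (1 + x) ^ (-t) :=
      rpow_le_rpow_of_nonpos (by positivity) (by linarith [add_one_le_exp x]) (by linarith)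

noncomputable def implicitLinOSSEigenvalue (a Δt : ℝ) : ℂ :=
  ((1 / (1 + Δt ^ 2 * a) : ℝ) : ℂ) + I * Δt * (1 / (1 + Δt ^ 2 * a) : ℝ) * √a

theorem norm_implicitLinOSSEigenvalue {a : ℝ} (ha : 0 ≤ a) (Δt : ℝ) :
    ‖implicitLinOSSEigenvalue a Δt‖ = (1 + Δt ^ 2 * a) ^ (-(1 / 2 : ℝ)) := by
  set D := 1 + Δt ^ 2 * a
  have hD : 0 < D := by positivity
  have hfactor : implicitLinOSSEigenvalue a Δt
      = ((1 / D : ℝ) : ℂ) * (((1 : ℝ) : ℂ) + ((Δt * √a : ℝ) : ℂ) * I) := by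
    rw [implicitLinOSSEigenvalue]; push_cast [D]; ring
  have hsq : (1 : ℝ) ^ 2 + (Δt * √a) ^ 2 = D := by rw [mul_pow, sq_sqrt ha]; ring
  rw [hfactor, norm_mul, Complex.norm_add_mul_I, hsq, Complex.norm_real,
    Real.norm_of_nonneg (by positivity), rpow_neg hD.le, ← sqrt_eq_rpow]
  field_simp
  exact sq_sqrt hD.le

theorem stmt17_general (a Δt s c : ℝ) (ha : 0 ≤ a)
    (hs : s = 1 / (1 + Δt ^ 2 * a))
    (lam : ℂ) (hlam : lam = (s : ℂ) + Complex.I * Δt * s * Real.sqrt a) :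
    ∀ n : ℕ, 1 ≤ n →
      (‖lam‖ ^ n = s ^ ((n : ℝ) / 2)
      ∧ ‖lam‖ ^ n = (1 + Δt ^ 2 * a) ^ (-(n : ℝ) / 2)
      ∧ 0 < ‖lam‖ ^ n
      ∧ (Δt ^ 2 * a ≤ c / n → Real.exp (-c / 2) ≤ ‖lam‖ ^ n)) := by
  intro n hn
  subst hs
  obtain rfl : lam = implicitLinOSSEigenvalue a Δt := hlam
  have hD : 0 < 1 + Δt ^ 2 * a := by positivity
  have hpow : ‖implicitLinOSSEigenvalue a Δt‖ ^ n = (1 + Δt ^ 2 * a) ^ (-(n : ℝ) / 2) := by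
    rw [norm_implicitLinOSSEigenvalue ha, ← rpow_natCast, ← rpow_mul hD.le]
    ring_nf
  refine ⟨?_, hpow, hpow ▸ rpow_pos_of_pos hD _, fun hle => ?_⟩
  · rw [hpow, one_div, inv_rpow hD.le, ← rpow_neg hD.le, neg_div]
  · have hn' : (0 : ℝ) < n := by exact_mod_cast hn
    have hnc : n * (Δt ^ 2 * a) ≤ c := by rwa [le_div_iff₀ hn', mul_comm] at hle
    calc exp (-c / 2) ≤ exp (-((n / 2) * (Δt ^ 2 * a))) := exp_le_exp.mpr (by linarith)
      _ ≤ _ := by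
        rw [hpow, neg_div]
        exact exp_neg_mul_le_one_add_rpow_neg (by positivity) (by positivity)

/-- for `a ≥ 0`, `Δt > 0`, `s = 1/(1+Δt²a)`, `λ = s + iΔts√a`, and
`n ≥ 1`: `|λ|ⁿ = s^{n/2} = (1+Δt²a)^{−n/2} > 0`; and if `Δt²a ≤ c/n` then
`|λ|ⁿ ≥ e^{−c/2}`. -/
theorem stmt17 (a Δt s c : ℝ) (ha : 0 ≤ a) (hΔt : 0 < Δt) (hc : 0 ≤ c)
    (hs : s = 1 / (1 + Δt ^ 2 * a))
    (lam : ℂ) (hlam : lam = (s : ℂ) + Complex.I * Δt * s * Real.sqrt a) :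
    ∀ n : ℕ, 1 ≤ n →
      (‖lam‖ ^ n = s ^ ((n : ℝ) / 2)
      ∧ ‖lam‖ ^ n = (1 + Δt ^ 2 * a) ^ (-(n : ℝ) / 2)
      ∧ 0 < ‖lam‖ ^ n
      ∧ (Δt ^ 2 * a ≤ c / n → Real.exp (-c / 2) ≤ ‖lam‖ ^ n)) :=
  stmt17_general a Δt s c ha hs lam hlam
end

section
/- Let M^IMEX = [[1, -Δt a], [Δt, 1 - Δt² a]] with a > 0 and 0 < Δt² a < 4. Then M^IMEX is diagonalizable over ℂ, all powers (M^IMEX)ⁿ are uniformly bounded in operator norm by a constant depending only on a and Δt (not on n), and consequently the zero-input recurrence x_n = M^IMEX x_{n-1} neither blows up nor decays to zero for generic initial conditions. -/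
private def qf (a Δt : ℝ) (w : Fin 2 → ℝ) : ℝ :=
  Δt * w 0 ^ 2 - Δt ^ 2 * a * (w 0 * w 1) + Δt * a * w 1 ^ 2

private lemma qf_inv (a Δt : ℝ) (M : Matrix (Fin 2) (Fin 2) ℝ)
    (hM : M = !![(1 : ℝ), -(Δt * a); Δt, 1 - Δt ^ 2 * a]) (w : Fin 2 → ℝ) :
    qf a Δt (M.mulVec w) = qf a Δt w := by
  subst hM
  simp [qf, Matrix.mulVec, dotProduct, Fin.sum_univ_two]
  ring

private lemma qf_pow (a Δt : ℝ) (M : Matrix (Fin 2) (Fin 2) ℝ)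
    (hM : M = !![(1 : ℝ), -(Δt * a); Δt, 1 - Δt ^ 2 * a]) (n : ℕ) (w : Fin 2 → ℝ) :
    qf a Δt ((M ^ n).mulVec w) = qf a Δt w := by
  induction n with
  | zero => simp
  | succ n ih =>
    rw [pow_succ', ← Matrix.mulVec_mulVec, qf_inv a Δt M hM, ih]

private lemma qf_upper (a Δt : ℝ) (ha : 0 < a) (hΔt : 0 < Δt) (w : Fin 2 → ℝ) :
    qf a Δt w ≤ (Δt + Δt ^ 2 * a + Δt * a) * (w 0 ^ 2 + w 1 ^ 2) := by
  have h1 : 0 < Δt ^ 2 * a := by positivity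
  unfold qf
  nlinarith [mul_nonneg h1.le (sq_nonneg (w 0 + w 1)), mul_nonneg h1.le (sq_nonneg (w 0)),
    mul_nonneg h1.le (sq_nonneg (w 1)), mul_nonneg hΔt.le (sq_nonneg (w 0)),
    mul_nonneg hΔt.le (sq_nonneg (w 1)), mul_nonneg (mul_nonneg hΔt.le ha.le) (sq_nonneg (w 0)),
    mul_nonneg (mul_nonneg hΔt.le ha.le) (sq_nonneg (w 1))]

private lemma qf_lower0 (a Δt : ℝ) (ha : 0 < a) (hΔt : 0 < Δt) (h4 : Δt ^ 2 * a < 4)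
    (w : Fin 2 → ℝ) : Δt * (4 - Δt ^ 2 * a) / 4 * w 0 ^ 2 ≤ qf a Δt w := by
  have h := mul_nonneg (by positivity : (0:ℝ) ≤ Δt * a) (sq_nonneg (w 1 - Δt / 2 * w 0))
  unfold qf; nlinarith [h]

private lemma qf_lower1 (a Δt : ℝ) (ha : 0 < a) (hΔt : 0 < Δt) (h4 : Δt ^ 2 * a < 4)
    (w : Fin 2 → ℝ) : Δt * a * (4 - Δt ^ 2 * a) / 4 * w 1 ^ 2 ≤ qf a Δt w := by
  have h := mul_nonneg (by positivity : (0:ℝ) ≤ Δt) (sq_nonneg (w 0 - Δt * a / 2 * w 1))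
  unfold qf; nlinarith [h]

private lemma norm_sq_le (w : Fin 2 → ℝ) : ‖w‖ ^ 2 ≤ 2 * (w 0 ^ 2 + w 1 ^ 2) := by
  have h : ‖w‖ ≤ |w 0| + |w 1| := by
    refine (pi_norm_le_iff_of_nonneg (by positivity)).2 fun i => ?_
    fin_cases i
    · simpa [Real.norm_eq_abs] using le_add_of_nonneg_right (abs_nonneg (w 1))
    · simpa [Real.norm_eq_abs] using le_add_of_nonneg_left (abs_nonneg (w 0))
  nlinarith [abs_nonneg (w 0), abs_nonneg (w 1), sq_abs (w 0), sq_abs (w 1),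
    sq_nonneg (|w 0| - |w 1|), norm_nonneg w]

private lemma sq_le_norm_sq (w : Fin 2 → ℝ) (i : Fin 2) : w i ^ 2 ≤ ‖w‖ ^ 2 := by
  have h := norm_le_pi_norm w i
  have h2 : |w i| ≤ ‖w‖ := by simpa [Real.norm_eq_abs] using h
  nlinarith [abs_nonneg (w i), sq_abs (w i)]


open Matrix Filter

/-- for `a > 0`, `0 < Δt² a < 4`, the matrix
`M^IMEX = [[1, -Δt a], [Δt, 1 - Δt² a]]` is diagonalizable over `ℂ`, its powers are
uniformly bounded in operator norm by a constant independent of `n`, and with zero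
input the recurrence `x_n = M x_{n-1}` neither blows up nor decays to zero for any
nonzero initial condition. -/
theorem stmt19 (a Δt : ℝ) (ha : 0 < a) (hΔt : 0 < Δt) (h4 : Δt ^ 2 * a < 4)
    (M : Matrix (Fin 2) (Fin 2) ℝ)
    (hM : M = !![(1 : ℝ), -(Δt * a); Δt, 1 - Δt ^ 2 * a]) :
    (∃ (S : Matrix (Fin 2) (Fin 2) ℂ) (dvec : Fin 2 → ℂ), IsUnit S ∧
        M.map (fun r => (r : ℂ)) = S * Matrix.diagonal dvec * S⁻¹)
    ∧ (∃ C : ℝ, ∀ (n : ℕ) (v : Fin 2 → ℝ), ‖(M ^ n).mulVec v‖ ≤ C * ‖v‖)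
    ∧ ∀ x₀ : Fin 2 → ℝ, x₀ ≠ 0 →
        (∃ C : ℝ, ∀ n : ℕ, ‖(M ^ n).mulVec x₀‖ ≤ C)
        ∧ ¬ Filter.Tendsto (fun n => (M ^ n).mulVec x₀) Filter.atTop (nhds 0) := by
  have hcdpos : 0 < Δt ^ 2 * a := by positivity
  -- constants for the quadratic form
  set K : ℝ := Δt + Δt ^ 2 * a + Δt * a with hKdef
  have hKpos : 0 < K := by positivity
  set m : ℝ := min (Δt * (4 - Δt ^ 2 * a) / 4) (Δt * a * (4 - Δt ^ 2 * a) / 4) with hmdef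
  have hmpos : 0 < m := lt_min (by nlinarith) (by nlinarith)
  have hql : ∀ w : Fin 2 → ℝ, m * (w 0 ^ 2 + w 1 ^ 2) ≤ 2 * qf a Δt w := by
    intro w
    have h0 := qf_lower0 a Δt ha hΔt h4 w
    have h1 := qf_lower1 a Δt ha hΔt h4 w
    have hm0 : m ≤ Δt * (4 - Δt ^ 2 * a) / 4 := min_le_left _ _
    have hm1 : m ≤ Δt * a * (4 - Δt ^ 2 * a) / 4 := min_le_right _ _
    nlinarith [sq_nonneg (w 0), sq_nonneg (w 1)]
  have hqu : ∀ w : Fin 2 → ℝ, qf a Δt w ≤ 2 * K * ‖w‖ ^ 2 := by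
    intro w
    have h := qf_upper a Δt ha hΔt w
    have h0 := sq_le_norm_sq w 0
    have h1 := sq_le_norm_sq w 1
    nlinarith
  have hqln : ∀ w : Fin 2 → ℝ, m * ‖w‖ ^ 2 ≤ 4 * qf a Δt w := by
    intro w
    have h := hql w
    have h2 := norm_sq_le w
    nlinarith
  -- the uniform bound (part 2)
  have hbound : ∀ (n : ℕ) (v : Fin 2 → ℝ),
      ‖(M ^ n).mulVec v‖ ≤ Real.sqrt (8 * K / m) * ‖v‖ := by
    intro n v
    have hinv := qf_pow a Δt M hM n v
    have h1 := hqln ((M ^ n).mulVec v)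
    have h2 := hqu v
    have hsq : ‖(M ^ n).mulVec v‖ ^ 2 ≤ 8 * K / m * ‖v‖ ^ 2 := by
      rw [div_mul_eq_mul_div, le_div_iff₀ hmpos]
      nlinarith
    have h3 : ‖(M ^ n).mulVec v‖ ^ 2 ≤ (Real.sqrt (8 * K / m) * ‖v‖) ^ 2 := by
      rwa [mul_pow, Real.sq_sqrt (by positivity)]
    have h4' := Real.sqrt_le_sqrt h3
    rwa [Real.sqrt_sq (norm_nonneg _), Real.sqrt_sq (by positivity)] at h4'
  refine ⟨?_, ⟨Real.sqrt (8 * K / m), hbound⟩, ?_⟩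
  · have hcdpos : 0 < Δt ^ 2 * a := by positivity
    obtain ⟨s, hspos, hs2⟩ : ∃ s : ℝ, 0 < s ∧ s ^ 2 = (Δt ^ 2 * a) * (4 - Δt ^ 2 * a) :=
      ⟨Real.sqrt ((Δt ^ 2 * a) * (4 - Δt ^ 2 * a)),
        Real.sqrt_pos.mpr (by nlinarith), Real.sq_sqrt (by nlinarith)⟩
    have key : (s : ℂ) ^ 2 = ((Δt:ℂ) ^ 2 * a) * (4 - (Δt:ℂ) ^ 2 * a) := by
      exact_mod_cast congrArg (fun x : ℝ => (x : ℂ)) hs2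
    have hI : (Complex.I) ^ 2 = -1 := Complex.I_sq
    obtain ⟨L1, L2, hl1, hl2⟩ : ∃ L1 L2 : ℂ,
        L1 = (2 - (Δt:ℂ) ^ 2 * a) / 2 + ((s : ℂ) / 2) * Complex.I ∧
        L2 = (2 - (Δt:ℂ) ^ 2 * a) / 2 - ((s : ℂ) / 2) * Complex.I := ⟨_, _, rfl, rfl⟩
    have hroot1 : L1 ^ 2 - ((2 : ℂ) - (Δt:ℂ) ^ 2 * a) * L1 + 1 = 0 := by
      rw [hl1]; linear_combination ((s:ℂ)/2)^2 * hI - (1/4 : ℂ) * key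
    have hroot2 : L2 ^ 2 - ((2 : ℂ) - (Δt:ℂ) ^ 2 * a) * L2 + 1 = 0 := by
      rw [hl2]; linear_combination ((s:ℂ)/2)^2 * hI - (1/4 : ℂ) * key
    have hdet : IsUnit (!![((Δt:ℂ) * a), (Δt:ℂ) * a; 1 - L1, 1 - L2] : Matrix (Fin 2) (Fin 2) ℂ).det := by
      rw [isUnit_iff_ne_zero, Matrix.det_fin_two_of]
      have h1 : (Δt:ℂ) * a * (1 - L2) - (Δt:ℂ) * a * (1 - L1) = (Δt:ℂ) * a * ((s:ℂ) * Complex.I) := by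
        rw [hl1, hl2]; ring
      rw [h1]
      have hΔ0 : (Δt : ℂ) ≠ 0 := by exact_mod_cast hΔt.ne'
      have ha0 : (a : ℂ) ≠ 0 := by exact_mod_cast ha.ne'
      have hs0 : (s : ℂ) ≠ 0 := by exact_mod_cast hspos.ne'
      exact mul_ne_zero (mul_ne_zero hΔ0 ha0) (mul_ne_zero hs0 Complex.I_ne_zero)
    refine ⟨!![((Δt:ℂ) * a), (Δt:ℂ) * a; 1 - L1, 1 - L2], ![L1, L2], ?_, ?_⟩
    · rwa [Matrix.isUnit_iff_isUnit_det]
    · have hMS : M.map (fun r => (r : ℂ)) * !![((Δt:ℂ) * a), (Δt:ℂ) * a; 1 - L1, 1 - L2]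
          = !![((Δt:ℂ) * a), (Δt:ℂ) * a; 1 - L1, 1 - L2] * Matrix.diagonal ![L1, L2] := by
        subst hM
        ext i j
        fin_cases i <;> fin_cases j <;>
          simp [Matrix.mul_apply, Fin.sum_univ_two, Matrix.map_apply, Matrix.diagonal] <;>
          push_cast
        · ring
        · ring
        · linear_combination hroot1
        · linear_combination hroot2
      calc M.map (fun r => (r : ℂ))
          = M.map (fun r => (r : ℂ)) * (!![((Δt:ℂ) * a), (Δt:ℂ) * a; 1 - L1, 1 - L2] * (!![((Δt:ℂ) * a), (Δt:ℂ) * a; 1 - L1, 1 - L2])⁻¹) := by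
            rw [Matrix.mul_nonsing_inv _ hdet, mul_one]
        _ = (M.map (fun r => (r : ℂ)) * !![((Δt:ℂ) * a), (Δt:ℂ) * a; 1 - L1, 1 - L2]) * (!![((Δt:ℂ) * a), (Δt:ℂ) * a; 1 - L1, 1 - L2])⁻¹ := by
            rw [Matrix.mul_assoc]
        _ = !![((Δt:ℂ) * a), (Δt:ℂ) * a; 1 - L1, 1 - L2] * Matrix.diagonal ![L1, L2] * (!![((Δt:ℂ) * a), (Δt:ℂ) * a; 1 - L1, 1 - L2])⁻¹ := by
            rw [hMS]
  · intro x₀ hx₀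
    refine ⟨⟨Real.sqrt (8 * K / m) * ‖x₀‖, fun n => hbound n x₀⟩, ?_⟩
    intro hT
    -- q x₀ > 0
    have hx : x₀ 0 ^ 2 + x₀ 1 ^ 2 > 0 := by
      rcases Function.ne_iff.1 hx₀ with ⟨i, hi⟩
      fin_cases i
      · have : x₀ 0 ≠ 0 := by simpa using hi
        positivity
      · have : x₀ 1 ≠ 0 := by simpa using hi
        positivity
    have hq0 : 0 < qf a Δt x₀ := by
      have := hql x₀
      nlinarith
    have hε : 0 < qf a Δt x₀ / (2 * K) := by positivity
    have hlow : ∀ n : ℕ, qf a Δt x₀ / (2 * K) ≤ ‖(M ^ n).mulVec x₀‖ ^ 2 := by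
      intro n
      have hinv := qf_pow a Δt M hM n x₀
      have h2 := hqu ((M ^ n).mulVec x₀)
      rw [div_le_iff₀ (by positivity)]
      nlinarith
    have hT2 : Filter.Tendsto (fun n => ‖(M ^ n).mulVec x₀‖ ^ 2) Filter.atTop (nhds 0) := by
      have := (hT.norm).pow 2
      simpa using this
    have := (hT2.eventually (gt_mem_nhds hε)).exists
    obtain ⟨n, hn⟩ := this
    exact absurd (hlow n) (not_le.2 hn)
end
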